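/- arXiv:2509.15573 — 4 statements merged into one kernel-verified Lean document; each statement's English description precedes it below -/
import Mathlib

section
/- Proposition B.2 (Size-Invariant Property of SI-F, M = 2): Let 0 < c₁ ≤ c₂ and 0 < ρ < 1 be real numbers. Then the size-invariant F-measure strictly prefers the predictor f_B that partially detects both objects over the predictor f_A that perfectly detects only the larger object: (1/2) · ( 2ρ/(1+ρ) + 2(1−ρ)·c₂/( c₁ + (1−ρ)·c₂ ) ) > 1/2, i.e. SI-F(f_B) > SI-F(f_A) = 1/2. Meanwhile the ordinary F-measures coincide: both predictors detect c₂ salient pixels in total with no false positives and c₁ false negatives, so F(f_A) = F(f_B) = 2c₂/(2c₂ + c₁). -/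
/-- Proposition B.2 (Size-Invariant Property of SI-F, M = 2): SI-F strictly prefers the
predictor `f_B` that partially detects both objects over `f_A` that perfectly detects only
the larger one, whereas the ordinary F-measures of both predictors coincide and equal
`2c₂/(2c₂+c₁)`. -/
theorem si_f_size_invariant_two_objects (c₁ c₂ ρ : ℝ)
    (h₁ : 0 < c₁) (h₁₂ : c₁ ≤ c₂) (hρ0 : 0 < ρ) (hρ1 : ρ < 1) :
    (1 / 2) * (2 * ρ / (1 + ρ) + 2 * (1 - ρ) * c₂ / (c₁ + (1 - ρ) * c₂)) > 1 / 2 ∧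
      2 * c₂ / (2 * c₂ + 0 + c₁) = 2 * c₂ / (2 * c₂ + c₁) ∧
      2 * (ρ * c₂ + (1 - ρ) * c₂) /
          (2 * (ρ * c₂ + (1 - ρ) * c₂) + 0 + ((1 - ρ) * c₂ + (c₁ - (1 - ρ) * c₂))) =
        2 * c₂ / (2 * c₂ + c₁) := by
  have hc₂ : 0 < c₂ := lt_of_lt_of_le h₁ h₁₂
  have hd1 : (0:ℝ) < 1 + ρ := by linarith
  have hd2 : (0:ℝ) < c₁ + (1 - ρ) * c₂ := by nlinarith
  refine ⟨?_, by ring_nf, by ring_nf⟩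
  have key : 1 < 2 * ρ / (1 + ρ) + 2 * (1 - ρ) * c₂ / (c₁ + (1 - ρ) * c₂) := by
    rw [div_add_div _ _ (ne_of_gt hd1) (ne_of_gt hd2), lt_div_iff₀ (by positivity)]
    nlinarith [mul_pos hρ0 (sub_pos.2 hρ1), mul_pos (mul_pos hρ0 (sub_pos.2 hρ1)) hc₂,
      mul_pos hρ0 h₁]
  linarith
end

section
/- Proposition (PBAcc equivalence (OP₀) = (OP₁), Eq. (32)): Let n ≥ 1, let y : Fin n → ℝ take values in {0,1}, let c : Fin n → ℝ, set ỹ = y ⊙ c (entrywise product), and suppose S⁻ := Σ_i (1 − y_i) > 0. Define the symmetric adjacency matrix A = (1/S⁻)·( ỹ·(𝟙−y)ᵀ + (𝟙−y)·ỹᵀ ) ∈ ℝ^{n×n} (𝟙 the all-ones vector) and the Laplacian P = diag(A·𝟙) − A. Then for every f : Fin n → ℝ, writing Q = f − y, the Laplacian quadratic form satisfies Qᵀ P Q = Σ_{p=1}^{n} Σ_{q=1}^{n} y_p·(1−y_q)·(c_p/S⁻) · ( 1 − (f_p − f_q) )². In particular, choosing c_p = 1/S_k⁺ for salient pixels p of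 foreground region k, the right-hand side is the size-invariant square-surrogate AUC loss Σ_k Σ_{p∈X_k⁺} Σ_{q∈X⁻} ℓ_sq(f_p − f_q)/(S_k⁺·S⁻) with ℓ_sq(z) = (1−z)². -/
/-!
The Laplacian quadratic form of any weight matrix `A` is `∑ p q, A p q * Q p * (Q p - Q q)`; when
`A = B + Bᵀ` the two halves pair up into `∑ p q, B p q * (Q p - Q q) ^ 2`. For
`B = (1 / S⁻) • ỹ (𝟙 - y)ᵀ` the weight `B p q` vanishes unless `p` is salient and `q` is not, and
for such a pair `Q p - Q q = (f p - f q) - 1`.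
-/

open Matrix Finset

namespace Matrix

variable {ι R : Type*} [Fintype ι] [DecidableEq ι] [CommRing R]

theorem dotProduct_laplacian_mulVec (A : Matrix ι ι R) (Q : ι → R) :
    Q ⬝ᵥ ((diagonal (A *ᵥ fun _ => 1) - A) *ᵥ Q) = ∑ p, ∑ q, A p q * (Q p * (Q p - Q q)) := by
  rw [sub_mulVec, dotProduct_sub]
  simp only [dotProduct, mulVec_diagonal]
  simp only [mulVec, dotProduct, sum_mul, mul_sum, ← sum_sub_distrib]
  exact sum_congr rfl fun p _ => sum_congr rfl fun q _ => by ring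

theorem dotProduct_laplacian_add_transpose_mulVec (B : Matrix ι ι R) (Q : ι → R) :
    Q ⬝ᵥ ((diagonal ((B + Bᵀ) *ᵥ fun _ => 1) - (B + Bᵀ)) *ᵥ Q) =
      ∑ p, ∑ q, B p q * (Q p - Q q) ^ 2 := by
  rw [dotProduct_laplacian_mulVec]
  simp only [add_apply, transpose_apply, add_mul, sum_add_distrib]
  rw [sum_comm (f := fun p q => B q p * (Q p * (Q p - Q q))), ← sum_add_distrib]
  exact sum_congr rfl fun p _ => by rw [← sum_add_distrib]; exact sum_congr rfl fun q _ => by ring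

end Matrix

theorem mul_one_sub_mul_sub_sq_eq_of_binary {y₁ y₂ : ℝ} (hy₁ : y₁ = 0 ∨ y₁ = 1)
    (hy₂ : y₂ = 0 ∨ y₂ = 1) (f₁ f₂ : ℝ) :
    y₁ * (1 - y₂) * ((f₁ - y₁) - (f₂ - y₂)) ^ 2 = y₁ * (1 - y₂) * (1 - (f₁ - f₂)) ^ 2 := by
  rcases hy₁ with rfl | rfl <;> rcases hy₂ with rfl | rfl <;> ring

theorem pbacc_quadratic_form_eq_si_auc_loss_general (n : ℕ)
    (y c : Fin n → ℝ) (hy : ∀ i, y i = 0 ∨ y i = 1)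
    (Sneg : ℝ)
    (ytil : Fin n → ℝ) (hytil : ytil = fun i => y i * c i)
    (A : Matrix (Fin n) (Fin n) ℝ)
    (hA : A = (1 / Sneg) • (Matrix.vecMulVec ytil (fun j => 1 - y j)
      + Matrix.vecMulVec (fun i => 1 - y i) ytil))
    (P : Matrix (Fin n) (Fin n) ℝ)
    (hP : P = Matrix.diagonal (Matrix.mulVec A (fun _ => 1)) - A)
    (f : Fin n → ℝ) (Q : Fin n → ℝ) (hQ : Q = fun i => f i - y i) :
    dotProduct Q (Matrix.mulVec P Q) =
      ∑ p, ∑ q, y p * (1 - y q) * (c p / Sneg) * (1 - (f p - f q)) ^ 2 := by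
  have hA_sym : A = (1 / Sneg) • vecMulVec ytil (fun j => 1 - y j)
      + ((1 / Sneg) • vecMulVec ytil (fun j => 1 - y j))ᵀ := by
    rw [hA, transpose_smul, transpose_vecMulVec, smul_add]
  subst hP hQ hytil
  rw [hA_sym, dotProduct_laplacian_add_transpose_mulVec]
  refine sum_congr rfl fun p _ => sum_congr rfl fun q _ => ?_
  have h := mul_one_sub_mul_sub_sq_eq_of_binary (hy p) (hy q) (f p) (f q)
  simp only [Matrix.smul_apply, vecMulVec_apply, smul_eq_mul]
  linear_combination c p / Sneg * h

/-- Proposition (PBAcc equivalence (OP₀) = (OP₁), Eq. (32)): the Laplacian quadratic form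
`Qᵀ P Q` equals the size-invariant square-surrogate AUC loss. -/
theorem pbacc_quadratic_form_eq_si_auc_loss (n : ℕ) (hn : 1 ≤ n)
    (y c : Fin n → ℝ) (hy : ∀ i, y i = 0 ∨ y i = 1)
    (Sneg : ℝ) (hSneg : Sneg = ∑ i, (1 - y i)) (hSpos : 0 < Sneg)
    (ytil : Fin n → ℝ) (hytil : ytil = fun i => y i * c i)
    (A : Matrix (Fin n) (Fin n) ℝ)
    (hA : A = (1 / Sneg) • (Matrix.vecMulVec ytil (fun j => 1 - y j)
      + Matrix.vecMulVec (fun i => 1 - y i) ytil))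
    (P : Matrix (Fin n) (Fin n) ℝ)
    (hP : P = Matrix.diagonal (Matrix.mulVec A (fun _ => 1)) - A)
    (f : Fin n → ℝ) (Q : Fin n → ℝ) (hQ : Q = fun i => f i - y i) :
    dotProduct Q (Matrix.mulVec P Q) =
      ∑ p, ∑ q, y p * (1 - y q) * (c p / Sneg) * (1 - (f p - f q)) ^ 2 :=
  pbacc_quadratic_form_eq_si_auc_loss_general n y c hy Sneg ytil hytil A hA P hP f Q hQ
end

section
/- Proposition 4.3 (Efficiency of (OP₁), closed form of the PBAcc quadratic form): Let n ≥ 1, let y : Fin n → ℝ take values in {0,1}, let c : Fin n → ℝ, set ỹ = y ⊙ c, suppose S⁻ := Σ_i (1 − y_i) > 0, set c⁺ = Σ_i ỹ_i, let A = (1/S⁻)·( ỹ·(𝟙−y)ᵀ + (𝟙−y)·ỹᵀ ), and P = diag(A·𝟙) − A. Then for every f : Fin n → ℝ, writing Q = f − y, the quadratic form evaluates to Qᵀ P Q = Σ_i ( ỹ_i + (c⁺/S⁻)·(1 − y_i) )·Q_i² − (2/S⁻) · ( Σ_i ỹ_i·Q_i ) · ( Σ_j (1 − y_j)·Q_j );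 i.e., it equals a diagonally weighted sum of squares minus twice the product of two inner products, each computable from Q with Θ(n) operations. -/
/-!
For any square matrix `A`, the quadratic form of `diag(A𝟙) - A` is `∑ dᵢ Qᵢ² - QᵀAQ` with
`d = A𝟙`. Here `A` is a multiple of the symmetrized rank-one matrix `uvᵀ + vuᵀ`, so
`QᵀAQ = 2 (u·Q)(v·Q)` and `A𝟙 = (∑ v) u + (∑ u) v`; with `u = ỹ`, `v = 𝟙 - y` and the scale
`1/S⁻`, the sums `∑ v = S⁻` and `∑ u = c⁺` give the stated weights.
-/

open Matrix

section RankTwoLaplacian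

variable {ι R : Type*} [Fintype ι] [CommRing R]

theorem dotProduct_vecMulVec_mulVec (u v w : ι → R) :
    w ⬝ᵥ (vecMulVec u v *ᵥ w) = (u ⬝ᵥ w) * (v ⬝ᵥ w) := by
  rw [vecMulVec_mulVec, op_smul_eq_smul, dotProduct_smul, smul_eq_mul, dotProduct_comm w u,
    mul_comm]

theorem dotProduct_vecMulVec_add_swap_mulVec (u v w : ι → R) :
    w ⬝ᵥ ((vecMulVec u v + vecMulVec v u) *ᵥ w) = 2 * (u ⬝ᵥ w) * (v ⬝ᵥ w) := by
  rw [add_mulVec, dotProduct_add, dotProduct_vecMulVec_mulVec, dotProduct_vecMulVec_mulVec]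
  ring

theorem vecMulVec_add_swap_mulVec_one (u v : ι → R) :
    (vecMulVec u v + vecMulVec v u) *ᵥ 1 = (∑ i, v i) • u + (∑ i, u i) • v := by
  rw [add_mulVec, vecMulVec_mulVec, vecMulVec_mulVec, op_smul_eq_smul, op_smul_eq_smul,
    dotProduct_one, dotProduct_one]

theorem dotProduct_diagonal_mulVec_one_sub_mulVec [DecidableEq ι] (A : Matrix ι ι R)
    (w : ι → R) :
    w ⬝ᵥ ((diagonal (A *ᵥ 1) - A) *ᵥ w) = ∑ i, (A *ᵥ 1) i * w i ^ 2 - w ⬝ᵥ (A *ᵥ w) := by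
  rw [sub_mulVec, dotProduct_sub]
  congr 1
  exact Finset.sum_congr rfl fun i _ => by rw [mulVec_diagonal]; ring

end RankTwoLaplacian

theorem pbacc_quadratic_form_closed_form_general (n : ℕ)
    (y : Fin n → ℝ)
    (Sneg : ℝ) (hSneg : Sneg = ∑ i, (1 - y i)) (hSpos : 0 < Sneg)
    (ytil : Fin n → ℝ)
    (cplus : ℝ) (hcplus : cplus = ∑ i, ytil i)
    (A : Matrix (Fin n) (Fin n) ℝ)
    (hA : A = (1 / Sneg) • (Matrix.vecMulVec ytil (fun j => 1 - y j)
      + Matrix.vecMulVec (fun i => 1 - y i) ytil))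
    (P : Matrix (Fin n) (Fin n) ℝ)
    (hP : P = Matrix.diagonal (Matrix.mulVec A (fun _ => 1)) - A)
    (Q : Fin n → ℝ) :
    dotProduct Q (Matrix.mulVec P Q) =
      (∑ i, (ytil i + (cplus / Sneg) * (1 - y i)) * (Q i) ^ 2)
        - (2 / Sneg) * (∑ i, ytil i * Q i) * (∑ j, (1 - y j) * Q j) := by
  have hdegree : A *ᵥ 1 = fun i => ytil i + (cplus / Sneg) * (1 - y i) := by
    rw [hA, smul_mulVec, vecMulVec_add_swap_mulVec_one, ← hSneg, ← hcplus]
    ext i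
    simp only [Pi.smul_apply, Pi.add_apply, smul_eq_mul]
    field_simp
  have hA_form : Q ⬝ᵥ (A *ᵥ Q) =
      (2 / Sneg) * (∑ i, ytil i * Q i) * (∑ j, (1 - y j) * Q j) := by
    rw [hA, smul_mulVec, dotProduct_smul, dotProduct_vecMulVec_add_swap_mulVec, smul_eq_mul]
    simp only [dotProduct]
    ring
  rw [hP, show (fun _ => 1 : Fin n → ℝ) = 1 from rfl, dotProduct_diagonal_mulVec_one_sub_mulVec, hdegree, hA_form]

/-- Proposition 4.3 (Efficiency of (OP₁)): the PBAcc quadratic form `Qᵀ P Q` evaluates to a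
diagonally weighted sum of squares minus twice the product of two inner products, each
computable from `Q` in `Θ(n)` operations. -/
theorem pbacc_quadratic_form_closed_form (n : ℕ) (hn : 1 ≤ n)
    (y c : Fin n → ℝ) (hy : ∀ i, y i = 0 ∨ y i = 1)
    (Sneg : ℝ) (hSneg : Sneg = ∑ i, (1 - y i)) (hSpos : 0 < Sneg)
    (ytil : Fin n → ℝ) (hytil : ytil = fun i => y i * c i)
    (cplus : ℝ) (hcplus : cplus = ∑ i, ytil i)
    (A : Matrix (Fin n) (Fin n) ℝ)
    (hA : A = (1 / Sneg) • (Matrix.vecMulVec ytil (fun j => 1 - y j)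
      + Matrix.vecMulVec (fun i => 1 - y i) ytil))
    (P : Matrix (Fin n) (Fin n) ℝ)
    (hP : P = Matrix.diagonal (Matrix.mulVec A (fun _ => 1)) - A)
    (f : Fin n → ℝ) (Q : Fin n → ℝ) (hQ : Q = fun i => f i - y i) :
    dotProduct Q (Matrix.mulVec P Q) =
      (∑ i, (ytil i + (cplus / Sneg) * (1 - y i)) * (Q i) ^ 2)
        - (2 / Sneg) * (∑ i, ytil i * Q i) * (∑ j, (1 - y j) * Q j) :=
  pbacc_quadratic_form_closed_form_general n y Sneg hSneg hSpos ytil cplus hcplus A hA P hP Q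
end

section
/- Theorem 5.1, Case 2 (Lipschitz constant of the size-invariant Dice loss, K = 4/ρ): Let I be a finite pixel set partitioned into M ≥ 1 pairwise disjoint nonempty frames B_1, …, B_M, let Y : I → ℝ take values in {0,1} with s_k := Σ_{i∈B_k} Y(i) > 0 for every k, and let ρ > 0 satisfy ρ ≤ s_k/|B_k| for every k (ρ is a lower bound on the per-frame foreground-to-box ratio). Define the size-invariant Dice loss g(f) = (1/M) · Σ_{k=1}^{M} ( 1 − 2·( Σ_{i∈B_k} Y(i)·f(i) ) / ( Σ_{i∈B_k} Y(i) + Σ_{i∈B_k} f(i) ) ). Then g is (4/ρ)-Lipschitz on [0,1]^I with respect to the sup norm: for all f, f̃ : I → ℝ with 0 ≤ f(i) ≤ 1 and 0 ≤ f̃(i) ≤ 1 for every i, |g(f) − g(f̃)| ≤ (4/ρ) · max_{i∈I} |f(i) − f̃(i)|. -/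
lemma dice_frame_aux (s F1 F2 P1 P2 n ε ρ : ℝ)
    (hs : 0 < s) (hF1 : 0 ≤ F1) (hF2 : 0 ≤ F2)
    (hP2 : 0 ≤ P2) (hP2s : P2 ≤ s)
    (hP : |P1 - P2| ≤ s * ε) (hF : |F1 - F2| ≤ n * ε)
    (hρ : 0 < ρ) (hρn : ρ * n ≤ s) (hsn : s ≤ n) (hε : 0 ≤ ε) :
    |(1 - 2 * P1 / (s + F1)) - (1 - 2 * P2 / (s + F2))| ≤ 4 / ρ * ε := by
  have hd1 : 0 < s + F1 := by linarith
  have hd2 : 0 < s + F2 := by linarith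
  have hρ1 : ρ ≤ 1 := by nlinarith
  have key : (1 - 2 * P1 / (s + F1)) - (1 - 2 * P2 / (s + F2))
      = 2 * ((P2 - P1) * (s + F2) + P2 * (F1 - F2)) / ((s + F1) * (s + F2)) := by
    field_simp
    ring
  rw [key, abs_div, abs_of_pos (mul_pos hd1 hd2)]
  rw [div_le_iff₀ (mul_pos hd1 hd2)]
  have h1 : |(P2 - P1) * (s + F2) + P2 * (F1 - F2)|
      ≤ s * ε * (s + F2) + s * (n * ε) := by
    calc |(P2 - P1) * (s + F2) + P2 * (F1 - F2)|
        ≤ |(P2 - P1) * (s + F2)| + |P2 * (F1 - F2)| := abs_add_le _ _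
      _ ≤ s * ε * (s + F2) + s * (n * ε) := by
          rw [abs_mul, abs_mul, abs_of_pos hd2, abs_of_nonneg hP2]
          have h : |P2 - P1| ≤ s * ε := by rw [abs_sub_comm]; exact hP
          gcongr
  have h2 : |2 * ((P2 - P1) * (s + F2) + P2 * (F1 - F2))|
      ≤ 2 * (s * ε * (s + F2) + s * (n * ε)) := by
    rw [abs_mul, abs_of_pos (by norm_num : (0:ℝ) < 2)]
    linarith
  refine h2.trans ?_
  have hinv : 4 / ρ = 4 * ρ⁻¹ := by ring
  have hρinv : 1 ≤ ρ⁻¹ := by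
    rw [le_inv_comm₀ one_pos hρ]; simpa using hρ1
  have hninv : n ≤ ρ⁻¹ * s := by
    calc n = ρ⁻¹ * (ρ * n) := by field_simp
      _ ≤ ρ⁻¹ * s := by gcongr
  rw [hinv]
  have hpi : (0:ℝ) ≤ ρ⁻¹ := inv_nonneg.mpr hρ.le
  have h3 : 2 * (ε * s * (s + F2)) ≤ 2 * ρ⁻¹ * ε * s * (s + F2) := by
    nlinarith [mul_nonneg (mul_nonneg hε hs.le) hd2.le]
  have h4 : 2 * (n * ε * s) ≤ 2 * ρ⁻¹ * ε * s * (s + F2) := by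
    have : n * ε * s ≤ (ρ⁻¹ * s) * ε * (s + F2) := by
      have h5 : n * ε ≤ ρ⁻¹ * s * ε := by nlinarith
      nlinarith [mul_nonneg (mul_nonneg hpi hs.le) hε]
    linarith
  have h6 : 4 * ρ⁻¹ * ε * (s * (s + F2)) ≤ 4 * ρ⁻¹ * ε * ((s + F1) * (s + F2)) := by
    have : s * (s + F2) ≤ (s + F1) * (s + F2) := by nlinarith
    nlinarith [mul_nonneg (mul_nonneg (by norm_num : (0:ℝ) ≤ 4) hpi) hε]
  linarith

/-- Theorem 5.1, Case 2 (Lipschitz constant of the size-invariant Dice loss, K = 4/ρ):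
the size-invariant Dice loss is `(4/ρ)`-Lipschitz on `[0,1]^I` with respect to the sup
norm, where `ρ` lower-bounds the per-frame foreground-to-box ratios. -/
theorem si_dice_loss_lipschitz {ι : Type*} [Fintype ι] [DecidableEq ι] [Nonempty ι]
    (M : ℕ) (hM : 1 ≤ M) (B : Fin M → Finset ι)
    (hdisj : ∀ k l : Fin M, k ≠ l → Disjoint (B k) (B l))
    (hne : ∀ k : Fin M, (B k).Nonempty)
    (hcover : (Finset.univ : Finset (Fin M)).biUnion B = (Finset.univ : Finset ι))
    (Y : ι → ℝ) (hY : ∀ i, Y i = 0 ∨ Y i = 1)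
    (hs : ∀ k, 0 < ∑ i ∈ B k, Y i)
    (ρ : ℝ) (hρ : 0 < ρ)
    (hratio : ∀ k, ρ ≤ (∑ i ∈ B k, Y i) / ((B k).card : ℝ))
    (f g : ι → ℝ)
    (hf : ∀ i, 0 ≤ f i ∧ f i ≤ 1) (hg : ∀ i, 0 ≤ g i ∧ g i ≤ 1) :
    |(1 / (M : ℝ)) * (∑ k, (1 - 2 * (∑ i ∈ B k, Y i * f i)
          / ((∑ i ∈ B k, Y i) + ∑ i ∈ B k, f i)))
        - (1 / (M : ℝ)) * (∑ k, (1 - 2 * (∑ i ∈ B k, Y i * g i)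
          / ((∑ i ∈ B k, Y i) + ∑ i ∈ B k, g i)))|
      ≤ (4 / ρ) * Finset.univ.sup' Finset.univ_nonempty (fun i => |f i - g i|) := by
  set ε := Finset.univ.sup' Finset.univ_nonempty (fun i => |f i - g i|) with hεdef
  have hεi : ∀ i, |f i - g i| ≤ ε := fun i => Finset.le_sup' (fun i => |f i - g i|) (Finset.mem_univ i)
  obtain ⟨i0⟩ := (inferInstance : Nonempty ι)
  have hε0 : 0 ≤ ε := le_trans (abs_nonneg _) (hεi i0)
  have hY0 : ∀ i, 0 ≤ Y i := fun i => by rcases hY i with h | h <;> simp [h]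
  have hY1 : ∀ i, Y i ≤ 1 := fun i => by rcases hY i with h | h <;> simp [h]
  have hframe : ∀ k : Fin M,
      |(1 - 2 * (∑ i ∈ B k, Y i * f i) / ((∑ i ∈ B k, Y i) + ∑ i ∈ B k, f i))
        - (1 - 2 * (∑ i ∈ B k, Y i * g i) / ((∑ i ∈ B k, Y i) + ∑ i ∈ B k, g i))|
      ≤ 4 / ρ * ε := by
    intro k
    have hcard : 0 < ((B k).card : ℝ) := by
      exact_mod_cast Finset.card_pos.mpr (hne k)
    apply dice_frame_aux _ _ _ _ _ ((B k).card : ℝ) ε ρ (hs k)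
    · exact Finset.sum_nonneg fun i _ => (hf i).1
    · exact Finset.sum_nonneg fun i _ => (hg i).1
    · exact Finset.sum_nonneg fun i _ => mul_nonneg (hY0 i) (hg i).1
    · calc (∑ i ∈ B k, Y i * g i) ≤ ∑ i ∈ B k, Y i := by
            apply Finset.sum_le_sum
            intro i _
            nlinarith [hY0 i, (hg i).1, (hg i).2]
      _ = _ := rfl
    · rw [← Finset.sum_sub_distrib]
      calc |∑ i ∈ B k, (Y i * f i - Y i * g i)|
          ≤ ∑ i ∈ B k, |Y i * f i - Y i * g i| := Finset.abs_sum_le_sum_abs _ _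
        _ ≤ ∑ i ∈ B k, Y i * ε := by
            apply Finset.sum_le_sum
            intro i _
            rw [← mul_sub, abs_mul, abs_of_nonneg (hY0 i)]
            exact mul_le_mul_of_nonneg_left (hεi i) (hY0 i)
        _ = (∑ i ∈ B k, Y i) * ε := by rw [Finset.sum_mul]
    · rw [← Finset.sum_sub_distrib]
      calc |∑ i ∈ B k, (f i - g i)|
          ≤ ∑ i ∈ B k, |f i - g i| := Finset.abs_sum_le_sum_abs _ _
        _ ≤ ∑ i ∈ B k, ε := Finset.sum_le_sum fun i _ => hεi i
        _ = ((B k).card : ℝ) * ε := by rw [Finset.sum_const, nsmul_eq_mul]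
    · exact hρ
    · exact (le_div_iff₀ hcard).mp (hratio k) |>.trans_eq rfl |> (fun h => h)
    · calc (∑ i ∈ B k, Y i) ≤ ∑ i ∈ B k, (1:ℝ) := Finset.sum_le_sum fun i _ => hY1 i
        _ = ((B k).card : ℝ) := by rw [Finset.sum_const, nsmul_eq_mul, mul_one]
    · exact hε0
  have hMpos : (0:ℝ) < M := by exact_mod_cast hM
  rw [← mul_sub, ← Finset.sum_sub_distrib, abs_mul, abs_of_pos (by positivity : (0:ℝ) < 1 / M)]
  refine le_trans (mul_le_mul_of_nonneg_left
    ((Finset.abs_sum_le_sum_abs _ _).trans (Finset.sum_le_sum fun k _ => hframe k))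
    (by positivity : (0:ℝ) ≤ 1 / M)) ?_
  rw [Finset.sum_const, Finset.card_univ, Fintype.card_fin, nsmul_eq_mul]
  rw [show (1 / (M:ℝ)) * ((M:ℝ) * (4 / ρ * ε)) = 4 / ρ * ε by field_simp]
end
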